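/- Let J = !![a, b; c, d] be a real 2×2 matrix and set m = (a+d)/2, h = (a−d)/2, p = (b+c)/2, z = (c−b)/2. Then (¬(a < 0 and d < 0) and J is not Hurwitz) holds if and only if ((−|h| ≤ m < 0 and m² + z² ≤ h² + p²) or m ≥ 0). (In game terms: the fixed point is an unstable non-Nash equilibrium iff these coordinate conditions hold.) -/
import Mathlib


/-- A real matrix is Hurwitz (stable) if every eigenvalue of the matrix,
viewed as a matrix over `ℂ`, has negative real part. -/
def IsHurwitz {n : ℕ} (J : Matrix (Fin n) (Fin n) ℝ) : Prop :=
  ∀ μ ∈ spectrum ℂ (J.map Complex.ofReal), μ.re < 0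

lemma spec_iff (a b c d : ℝ) (μ : ℂ) :
    μ ∈ spectrum ℂ ((!![a, b; c, d]).map Complex.ofReal) ↔
      (μ - a) * (μ - d) - b * c = 0 := by
  have hmap : (!![a, b; c, d]).map Complex.ofReal = !![(a:ℂ), b; c, d] := by
    ext i j; fin_cases i <;> fin_cases j <;> simp
  rw [hmap, spectrum.mem_iff, Matrix.isUnit_iff_isUnit_det, isUnit_iff_ne_zero, not_ne_iff]
  have hd : (algebraMap ℂ (Matrix (Fin 2) (Fin 2) ℂ) μ - !![(a:ℂ), b; c, d]).det
      = (μ - a) * (μ - d) - b * c := by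
    simp [Matrix.det_fin_two, Matrix.algebraMap_matrix_apply]
  rw [hd]

lemma hurwitz_iff (a b c d : ℝ) :
    IsHurwitz !![a, b; c, d] ↔ a + d < 0 ∧ 0 < a * d - b * c := by
  constructor
  · intro H
    rcases le_or_gt 0 ((a+d)^2 - 4*(a*d - b*c)) with hΔ | hΔ
    · set s := Real.sqrt ((a+d)^2 - 4*(a*d - b*c)) with hs
      have hs0 : 0 ≤ s := Real.sqrt_nonneg _
      have hs2 : s^2 = (a+d)^2 - 4*(a*d - b*c) := Real.sq_sqrt hΔ
      have h1 : (((a+d+s)/2 : ℝ) : ℂ) ∈ spectrum ℂ ((!![a, b; c, d]).map Complex.ofReal) := by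
        rw [spec_iff]
        have : (((a+d+s)/2 : ℝ) - a) * (((a+d+s)/2 : ℝ) - d) - b * c = 0 := by
          linear_combination hs2 / 4
        calc ((((a+d+s)/2 : ℝ):ℂ) - a) * ((((a+d+s)/2 : ℝ):ℂ) - d) - b * c
            = ((((a+d+s)/2 : ℝ) - a) * (((a+d+s)/2 : ℝ) - d) - b * c : ℝ) := by push_cast; ring
          _ = 0 := by rw [this]; norm_num
      have h2 : (((a+d-s)/2 : ℝ) : ℂ) ∈ spectrum ℂ ((!![a, b; c, d]).map Complex.ofReal) := by
        rw [spec_iff]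
        have : (((a+d-s)/2 : ℝ) - a) * (((a+d-s)/2 : ℝ) - d) - b * c = 0 := by
          linear_combination hs2 / 4
        calc ((((a+d-s)/2 : ℝ):ℂ) - a) * ((((a+d-s)/2 : ℝ):ℂ) - d) - b * c
            = ((((a+d-s)/2 : ℝ) - a) * (((a+d-s)/2 : ℝ) - d) - b * c : ℝ) := by push_cast; ring
          _ = 0 := by rw [this]; norm_num
      have r1 := H _ h1
      have r2 := H _ h2
      simp only [Complex.ofReal_re] at r1 r2
      constructor
      · linarith
      · nlinarith
    · set s := Real.sqrt (-((a+d)^2 - 4*(a*d - b*c))) with hs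
      have hs2 : s^2 = -((a+d)^2 - 4*(a*d - b*c)) := Real.sq_sqrt (by linarith)
      set μ : ℂ := (((a+d)/2 : ℝ) : ℂ) + (s:ℂ)/2 * Complex.I with hμ
      have h1 : μ ∈ spectrum ℂ ((!![a, b; c, d]).map Complex.ofReal) := by
        rw [spec_iff]
        have hs2c : (s:ℂ)^2 = -((((a:ℂ)+d))^2 - 4*((a:ℂ)*d - b*c)) := by
          exact_mod_cast hs2
        rw [hμ]
        push_cast
        linear_combination (-(1:ℂ)/4) * hs2c + ((s:ℂ)^2/4) * Complex.I_sq
      have r1 := H _ h1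
      have hre : μ.re = (a+d)/2 := by simp [hμ]
      rw [hre] at r1
      constructor
      · linarith
      · nlinarith
  · rintro ⟨hT, hD⟩ μ hμ
    rw [spec_iff] at hμ
    set x := μ.re
    set y := μ.im
    have e1 : x^2 - y^2 - (a+d)*x + (a*d - b*c) = 0 := by
      have := congrArg Complex.re hμ
      simp [Complex.mul_re, Complex.sub_re, Complex.sub_im] at this
      nlinarith [this]
    have e2 : y * (2*x - (a+d)) = 0 := by
      have := congrArg Complex.im hμ
      simp [Complex.mul_im, Complex.sub_re, Complex.sub_im] at this
      nlinarith [this]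
    by_contra h0
    push_neg at h0
    have hy : y = 0 := by
      rcases mul_eq_zero.mp e2 with hy | hx
      · exact hy
      · nlinarith
    rw [hy] at e1
    nlinarith

theorem nonNash_and_unstable_iff (a b c d m h p z : ℝ)
    (hm : m = (a + d) / 2) (hh : h = (a - d) / 2)
    (hp : p = (b + c) / 2) (hz : z = (c - b) / 2) :
    (¬ (a < 0 ∧ d < 0) ∧ ¬ IsHurwitz !![a, b; c, d]) ↔
      (((-|h| ≤ m ∧ m < 0) ∧ m ^ 2 + z ^ 2 ≤ h ^ 2 + p ^ 2) ∨ m ≥ 0) := by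
  subst hm hh hp hz
  rw [hurwitz_iff]
  push_neg
  constructor
  · rintro ⟨h1, h2⟩
    rcases le_or_gt 0 (a + d) with hT | hT
    · right; linarith
    · left
      have h2' : a * d - b * c ≤ 0 := h2 hT
      have hor : 0 ≤ a ∨ 0 ≤ d := by
        by_contra hc; push_neg at hc
        exact absurd (h1 hc.1) (not_le.mpr hc.2)
      refine ⟨⟨?_, by linarith⟩, by nlinarith⟩
      rcases abs_cases ((a - d) / 2) with ⟨he, _⟩ | ⟨he, _⟩ <;>
        rcases hor with ha | hd <;> linarith
  · rintro (⟨⟨h1, h2⟩, h3⟩ | hm)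
    · constructor
      · intro ha
        rcases abs_cases ((a - d) / 2) with ⟨he, _⟩ | ⟨he, _⟩ <;> linarith [ha]
      · intro _; nlinarith
    · exact ⟨fun ha => by linarith, fun hT => by linarith⟩
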